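/- For every integer n ≥ 2 and every k ≥ 1, BPL_n(ℝ) acts approximately order k-transitively on ℝ: given points x₁ < x₂ < ⋯ < x_k in ℝ and closed intervals I₁, I₂, …, I_k with nonempty interiors such that every point of Iᵢ is less than every point of I_{i+1} for each i, there exists f ∈ BPL_n(ℝ) with f(xᵢ) ∈ Iᵢ for all 1 ≤ i ≤ k. -/

import Mathlib

noncomputable section

/-- `ℤ[1/n]` realized as a subset of `ℝ`: all reals of the form `a * n^b` with `a b : ℤ`. -/
def zpows (n : ℕ) : Set ℝ := {x : ℝ | ∃ a b : ℤ, x = (a : ℝ) * (n : ℝ) ^ b}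

/-- The defining properties of the (unique) ring homomorphism `φₙ : ℤ[1/n] → ℤ/(n-1)ℤ`,
expressed for a function `φ : ℝ → ZMod (n-1)` restricted to the subset `zpows n`. -/
def IsPhi (n : ℕ) (φ : ℝ → ZMod (n - 1)) : Prop :=
  (∀ x ∈ zpows n, ∀ y ∈ zpows n, φ (x + y) = φ x + φ y) ∧
  (∀ x ∈ zpows n, ∀ y ∈ zpows n, φ (x * y) = φ x * φ y) ∧
  φ 1 = 1

/-- `B` is a discrete subset of `ℝ`: every point of `ℝ` has a neighborhood containing
at most one point of `B`. -/
def LocDiscrete (B : Set ℝ) : Prop := ∀ x : ℝ, ∃ ε > 0, ∀ y ∈ B, |y - x| < ε → y = x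

/-- Membership in `PLₙ(ℝ)`: an orientation-preserving homeomorphism of `ℝ`
(equivalently, a strictly monotone surjection), piecewise linear with breaks in a
discrete subset of `ℤ[1/n]`, all slopes integral powers of `n`, and mapping `ℤ[1/n]`
into itself. -/
def MemPL (n : ℕ) (f : ℝ → ℝ) : Prop :=
  StrictMono f ∧ Function.Surjective f ∧
  (∃ B : Set ℝ, B ⊆ zpows n ∧ LocDiscrete B ∧
    ∀ x ∉ B, ∃ (k : ℤ) (c : ℝ), ∃ ε > 0, ∀ y : ℝ, |y - x| < ε → f y = (n : ℝ) ^ k * y + c) ∧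
  (∀ q ∈ zpows n, f q ∈ zpows n)

/-- Membership in `BPLₙ(ℝ)`: elements of `PLₙ(ℝ)` with bounded support. -/
def MemBPL (n : ℕ) (f : ℝ → ℝ) : Prop :=
  MemPL n f ∧ ∃ M : ℝ, ∀ x : ℝ, M < |x| → f x = x

/-!
Every point `y > lo` can be pushed into any open interval above `lo` by an element of
`BPLₙ(ℝ)` fixing `(-∞, lo]`: the bump with slope `nᵉ` on `[p, p + L]` and slope `n⁻ᵉ` on the
following `nᵉ L` sends `y ∈ [p, p + L]` to `p + nᵉ (y - p)`. Taking `|e|` large (its sign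
decides the direction), the intermediate value theorem gives a real `p` hitting the target, and
density of `ℤ[1/n]` an admissible one. Composing such movers places `x₁, …, x_k` from left to
right, each one fixing everything up to the previously placed point.
-/

open Set Filter Topology

section

variable {n : ℕ}

def zpowsSubring (n : ℕ) (hn : n ≠ 0) : Subring ℝ where
  carrier := zpows n
  mul_mem' := by
    rintro _ _ ⟨a, b, rfl⟩ ⟨a', b', rfl⟩
    exact ⟨a * a', b + b', by rw [zpow_add₀ (by exact_mod_cast hn)]; push_cast; ring⟩
  one_mem' := ⟨1, 0, by simp⟩
  add_mem' := by
    rintro _ _ ⟨a, b, rfl⟩ ⟨a', b', rfl⟩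
    obtain ⟨m, i, j, rfl, rfl⟩ : ∃ (m : ℤ) (i j : ℕ), b = m + i ∧ b' = m + j :=
      ⟨min b b', (b - min b b').toNat, (b' - min b b').toNat, by omega, by omega⟩
    refine ⟨a * n ^ i + a' * n ^ j, m, ?_⟩
    rw [zpow_add₀ (by exact_mod_cast hn), zpow_add₀ (by exact_mod_cast hn), zpow_natCast,
      zpow_natCast]
    push_cast
    ring
  zero_mem' := ⟨0, 0, by simp⟩
  neg_mem' := by
    rintro _ ⟨a, b, rfl⟩
    exact ⟨-a, b, by push_cast; ring⟩

lemma zpow_mem_zpows (k : ℤ) : (n : ℝ) ^ k ∈ zpows n := ⟨1, k, by simp⟩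

lemma dense_zpows (hn : 1 < n) : Dense (zpows n) := by
  refine dense_of_exists_between fun u v huv => ?_
  obtain ⟨m, hm⟩ := pow_unbounded_of_one_lt (v - u)⁻¹ (by exact_mod_cast hn : (1 : ℝ) < n)
  set N : ℝ := (n : ℝ) ^ m
  have hN : 0 < N := by positivity
  have hgap : 1 < (v - u) * N := by
    rw [inv_lt_iff_one_lt_mul₀ (sub_pos.2 huv)] at hm; linarith
  refine ⟨(⌊u * N⌋ + 1) * (n : ℝ) ^ (-(m : ℤ)), ⟨⌊u * N⌋ + 1, -(m : ℤ), by push_cast; ring⟩, ?_⟩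
  rw [zpow_neg, zpow_natCast, ← div_eq_mul_inv, mem_Ioo, lt_div_iff₀ hN, div_lt_iff₀ hN]
  exact ⟨Int.lt_floor_add_one _, by linarith [Int.floor_le (u * N)]⟩

lemma locDiscrete_iff {B : Set ℝ} : LocDiscrete B ↔ ∀ x, ∀ᶠ y in 𝓝 x, y ∈ B → y = x := by
  simp only [LocDiscrete, Metric.eventually_nhds_iff, Real.dist_eq]
  exact forall_congr' fun x => exists_congr fun ε => and_congr_right fun _ =>
    ⟨fun h y hy hyB => h y hyB hy, fun h y hyB hy => h hy hyB⟩

lemma locDiscrete_of_finite {B : Set ℝ} (hB : B.Finite) : LocDiscrete B := by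
  refine locDiscrete_iff.2 fun x => ?_
  filter_upwards [(hB.sdiff (t := {x})).isClosed.compl_mem_nhds (by simp)] with y hy hyB
  by_contra hyx
  exact hy ⟨hyB, hyx⟩

lemma LocDiscrete.union {B C : Set ℝ} (hB : LocDiscrete B) (hC : LocDiscrete C) :
    LocDiscrete (B ∪ C) := by
  rw [locDiscrete_iff] at *
  intro x
  filter_upwards [hB x, hC x] with y hyB hyC hy
  exact hy.elim hyB hyC

lemma LocDiscrete.preimage {B : Set ℝ} {f : ℝ → ℝ} (hB : LocDiscrete B) (hf : Continuous f)
    (hinj : f.Injective) : LocDiscrete (f ⁻¹' B) := by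
  rw [locDiscrete_iff] at *
  exact fun x => (hf.continuousAt.eventually (hB (f x))).mono fun y hy hyB => hinj (hy hyB)

def LocallyAffineAt (n : ℕ) (f : ℝ → ℝ) (x : ℝ) : Prop :=
  ∃ (k : ℤ) (c : ℝ), f =ᶠ[𝓝 x] fun y => (n : ℝ) ^ k * y + c

lemma locallyAffineAt_iff {f : ℝ → ℝ} {x : ℝ} : LocallyAffineAt n f x ↔
    ∃ (k : ℤ) (c : ℝ), ∃ ε > 0, ∀ y : ℝ, |y - x| < ε → f y = (n : ℝ) ^ k * y + c := by
  simp only [LocallyAffineAt, EventuallyEq, Metric.eventually_nhds_iff, Real.dist_eq]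

lemma LocallyAffineAt.comp (hn : n ≠ 0) {f g : ℝ → ℝ} {x : ℝ} (hf : LocallyAffineAt n f x)
    (hg : LocallyAffineAt n g (f x)) : LocallyAffineAt n (g ∘ f) x := by
  obtain ⟨k, c, hfk⟩ := hf
  obtain ⟨k', c', hgk⟩ := hg
  have hcont : ContinuousAt f x :=
    (by fun_prop : ContinuousAt (fun y => (n : ℝ) ^ k * y + c) x).congr hfk.symm
  refine ⟨k' + k, (n : ℝ) ^ k' * c + c', (hgk.comp_tendsto hcont).trans ?_⟩
  filter_upwards [hfk] with y hy
  simp only [Function.comp_apply, hy, zpow_add₀ ((Nat.cast_ne_zero (R := ℝ)).2 hn)]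
  ring

lemma LocallyAffineAt.mem_zpows (hn : 1 < n) {f : ℝ → ℝ} {x : ℝ} (hf : LocallyAffineAt n f x)
    (hfZ : ∀ q ∈ zpows n, f q ∈ zpows n) (hfx : f x ∈ zpows n) : x ∈ zpows n := by
  obtain ⟨k, c, hfk⟩ := hf
  let Z := zpowsSubring n (by omega)
  obtain ⟨q, hqZ, hq⟩ := (dense_zpows hn).inter_nhds_nonempty hfk
  have hcZ : c ∈ Z := by
    have : c = f q - (n : ℝ) ^ k * q := by rw [hq]; ring
    exact this ▸ Z.sub_mem (hfZ q hqZ) (Z.mul_mem (zpow_mem_zpows k) hqZ)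
  have hx : x = (n : ℝ) ^ (-k) * (f x - c) := by
    rw [hfk.eq_of_nhds, add_sub_cancel_right, ← mul_assoc, ← zpow_add₀ (by norm_cast; omega)]
    simp
  exact hx ▸ Z.mul_mem (zpow_mem_zpows _) (Z.sub_mem hfx hcZ)

lemma MemPL.comp (hn : 1 < n) {f g : ℝ → ℝ} (hf : MemPL n f) (hg : MemPL n g) :
    MemPL n (g ∘ f) := by
  obtain ⟨hfm, hfs, ⟨Bf, hBfZ, hBf, hfaff⟩, hfZ⟩ := hf
  obtain ⟨hgm, hgs, ⟨Bg, hBgZ, hBg, hgaff⟩, hgZ⟩ := hg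
  have hfc : Continuous f := hfm.monotone.continuous_of_surjective hfs
  simp only [← locallyAffineAt_iff] at hfaff hgaff
  refine ⟨hgm.comp hfm, hgs.comp hfs, ⟨Bf ∪ f ⁻¹' Bg, ?_,
    LocDiscrete.union hBf (LocDiscrete.preimage hBg hfc hfm.injective), fun x hx => ?_⟩,
    fun q hq => hgZ _ (hfZ q hq)⟩
  · rintro x (hx | hx)
    · exact hBfZ hx
    · by_cases hxf : x ∈ Bf
      · exact hBfZ hxf
      · exact (hfaff x hxf).mem_zpows hn hfZ (hBgZ hx)
  · simp only [mem_union, mem_preimage, not_or] at hx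
    exact locallyAffineAt_iff.1 ((hfaff x hx.1).comp (by omega) (hgaff (f x) hx.2))

lemma MemBPL.comp (hn : 1 < n) {f g : ℝ → ℝ} (hf : MemBPL n f) (hg : MemBPL n g) :
    MemBPL n (g ∘ f) := by
  obtain ⟨hfPL, Mf, hMf⟩ := hf
  obtain ⟨hgPL, Mg, hMg⟩ := hg
  refine ⟨MemPL.comp hn hfPL hgPL, max Mf Mg, fun x hx => ?_⟩
  rw [Function.comp_apply, hMf x (lt_of_le_of_lt (le_max_left _ _) hx),
    hMg x (lt_of_le_of_lt (le_max_right _ _) hx)]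

lemma memBPL_id : MemBPL n id :=
  ⟨⟨strictMono_id, Function.surjective_id, ⟨∅, empty_subset _, locDiscrete_of_finite finite_empty,
    fun _ _ => ⟨0, 0, 1, one_pos, fun y _ => by simp⟩⟩, fun _ hq => hq⟩, 0, fun _ _ => rfl⟩

def kink (n : ℕ) (e : ℤ) (p x : ℝ) : ℝ :=
  if x ≤ p then x else p + (n : ℝ) ^ e * (x - p)

lemma kink_of_le {e : ℤ} {p x : ℝ} (hx : x ≤ p) : kink n e p x = x := if_pos hx

lemma kink_of_ge {e : ℤ} {p x : ℝ} (hx : p ≤ x) : kink n e p x = p + (n : ℝ) ^ e * (x - p) := by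
  rcases hx.eq_or_lt with rfl | hx
  · simp [kink]
  · exact if_neg hx.not_ge

lemma kink_strictMono (hn : n ≠ 0) (e : ℤ) (p : ℝ) : StrictMono (kink n e p) := by
  refine StrictMonoOn.Iic_union_Ici (a := p) (fun x hx y hy hxy => ?_) fun x hx y hy hxy => ?_
  · rwa [kink_of_le hx, kink_of_le hy]
  · rw [kink_of_ge hx, kink_of_ge hy]
    gcongr

lemma kink_kink_neg (hn : n ≠ 0) (e : ℤ) (p y : ℝ) : kink n e p (kink n (-e) p y) = y := by
  rcases le_total y p with hy | hy
  · rw [kink_of_le hy, kink_of_le hy]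
  · have hne : (0 : ℝ) < (n : ℝ) ^ (-e) := zpow_pos (by positivity) _
    rw [kink_of_ge hy, kink_of_ge (by nlinarith), add_sub_cancel_left, ← mul_assoc,
      ← zpow_add₀ (by positivity), add_neg_cancel, zpow_zero, one_mul, add_sub_cancel]

lemma locallyAffineAt_kink {e : ℤ} {p x : ℝ} (hx : x ≠ p) : LocallyAffineAt n (kink n e p) x := by
  rcases hx.lt_or_gt with hx | hx
  · refine ⟨0, 0, ?_⟩
    filter_upwards [Iio_mem_nhds hx] with y hy
    simp [kink_of_le (le_of_lt hy)]
  · refine ⟨e, p - (n : ℝ) ^ e * p, ?_⟩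
    filter_upwards [Ioi_mem_nhds hx] with y hy
    rw [kink_of_ge (le_of_lt hy)]
    ring

lemma memPL_kink (hn : n ≠ 0) (e : ℤ) {p : ℝ} (hp : p ∈ zpows n) : MemPL n (kink n e p) := by
  let Z := zpowsSubring n hn
  refine ⟨kink_strictMono hn e p, fun y => ⟨_, kink_kink_neg hn e p y⟩,
    ⟨{p}, singleton_subset_iff.2 hp, locDiscrete_of_finite (finite_singleton p),
      fun x hx => locallyAffineAt_iff.1 (locallyAffineAt_kink hx)⟩, fun q hq => ?_⟩
  rcases le_total q p with hqp | hqp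
  · rwa [kink_of_le hqp]
  · rw [kink_of_ge hqp]
    exact Z.add_mem hp (Z.mul_mem (zpow_mem_zpows e) (Z.sub_mem hq hp))

/-- Slope `nᵉ` on `[p, p + L]`, slope `n⁻ᵉ` on `[p + L, p + L + nᵉ L]`, the identity elsewhere. -/
def bump (n : ℕ) (e : ℤ) (p L : ℝ) : ℝ → ℝ :=
  kink n e (p + L + (n : ℝ) ^ e * L) ∘ kink n (-2 * e) (p + (n : ℝ) ^ e * L) ∘ kink n e p

section bump

variable {e : ℤ} {p L : ℝ}

lemma bump_of_le (hL : 0 ≤ L) {x : ℝ} (hx : x ≤ p) : bump n e p L x = x := by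
  have : 0 ≤ (n : ℝ) ^ e * L := mul_nonneg (zpow_nonneg (Nat.cast_nonneg n) e) hL
  simp only [bump, Function.comp_apply]
  rw [kink_of_le hx, kink_of_le (show x ≤ p + (n : ℝ) ^ e * L by linarith),
    kink_of_le (show x ≤ p + L + (n : ℝ) ^ e * L by linarith)]

lemma bump_apply (hL : 0 ≤ L) {y : ℝ} (hpy : p ≤ y) (hyL : y ≤ p + L) :
    bump n e p L y = p + (n : ℝ) ^ e * (y - p) := by
  have hle : p + (n : ℝ) ^ e * (y - p) ≤ p + (n : ℝ) ^ e * L := by gcongr; linarith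
  simp only [bump, Function.comp_apply]
  rw [kink_of_ge hpy, kink_of_le hle, kink_of_le (by linarith)]

lemma bump_of_ge (hn : n ≠ 0) (hL : 0 ≤ L) {x : ℝ} (hx : p + L + (n : ℝ) ^ e * L ≤ x) :
    bump n e p L x = x := by
  set N : ℝ := (n : ℝ) ^ e
  have hN : 0 < N := zpow_pos (by positivity) e
  have hNM : N * ((n : ℝ) ^ (-2 * e) * N) = 1 := by
    rw [← zpow_add₀ (by positivity), ← zpow_add₀ (by positivity)]
    ring_nf
    exact zpow_zero _
  have hNL : 0 ≤ N * L := by positivity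
  simp only [bump, Function.comp_apply]
  rw [kink_of_ge (show p ≤ x by linarith), kink_of_ge (show p + N * L ≤ p + N * (x - p) by
    gcongr; linarith)]
  rw [kink_of_ge (show p + L + N * L ≤ p + N * L + (n : ℝ) ^ (-2 * e) * (p + N * (x - p) -
    (p + N * L)) by nlinarith)]
  linear_combination (x - p - L) * hNM

lemma memBPL_bump (hn : 1 < n) (hp : p ∈ zpows n) (hL : L ∈ zpows n) (hL0 : 0 ≤ L) :
    MemBPL n (bump n e p L) := by
  let Z := zpowsSubring n (by omega)
  have hNL : (n : ℝ) ^ e * L ∈ zpows n := Z.mul_mem (zpow_mem_zpows e) hL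
  refine ⟨((memPL_kink (by omega) e hp).comp hn
    (memPL_kink (by omega) (-2 * e) (Z.add_mem hp hNL))).comp hn
    (memPL_kink (by omega) e (Z.add_mem (Z.add_mem hp hL) hNL)),
    |p| + |p + L + (n : ℝ) ^ e * L|, fun x hx => ?_⟩
  rcases lt_abs.1 hx with hx | hx
  · exact bump_of_ge (by omega) hL0
      (by linarith [le_abs_self (p + L + (n : ℝ) ^ e * L), abs_nonneg p])
  · exact bump_of_le hL0 (by linarith [neg_abs_le p, abs_nonneg (p + L + (n : ℝ) ^ e * L)])

end bump

lemma exists_zpow_affine_mem_Ioo (hn : 1 < n) {lo y α β : ℝ} (hy : lo < y) (hα : lo < α)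
    (hαβ : α < β) : ∃ e : ℤ, ∃ p ∈ Ioo lo y, p + (n : ℝ) ^ e * (y - p) ∈ Ioo α β := by
  have hn' : (1 : ℝ) < n := by exact_mod_cast hn
  have hφ (e : ℤ) : ContinuousOn (fun p => p + (n : ℝ) ^ e * (y - p)) (Icc lo y) := by fun_prop
  rcases lt_or_ge α y with hαy | hyα
  · obtain ⟨m, hm⟩ := pow_unbounded_of_one_lt ((y - lo) / (α - lo)) hn'
    rw [div_lt_iff₀ (by linarith)] at hm
    have hlo : lo + (n : ℝ) ^ (-(m : ℤ)) * (y - lo) < α := by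
      rw [zpow_neg, zpow_natCast, ← div_eq_inv_mul, ← lt_sub_iff_add_lt',
        div_lt_iff₀ (by positivity)]
      linarith
    obtain ⟨t, hαt, htβy⟩ := exists_between (lt_min hαβ hαy)
    obtain ⟨p, hp, hpt⟩ := intermediate_value_Ioo hy.le (hφ (-(m : ℤ)))
      ⟨hlo.trans hαt, by simpa using (htβy.trans_le (min_le_right β y))⟩
    refine ⟨-(m : ℤ), p, hp, ?_⟩
    simp only at hpt
    exact hpt ▸ ⟨hαt, htβy.trans_le (min_le_left β y)⟩
  · obtain ⟨m, hm⟩ := pow_unbounded_of_one_lt ((β - lo) / (y - lo)) hn'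
    rw [div_lt_iff₀ (by linarith)] at hm
    obtain ⟨t, hαt, htβ⟩ := exists_between hαβ
    obtain ⟨p, hp, hpt⟩ := intermediate_value_Ioo' hy.le (hφ m)
      ⟨by simpa using hyα.trans_lt hαt, by simp only [zpow_natCast]; linarith⟩
    refine ⟨m, p, hp, ?_⟩
    simp only at hpt
    exact hpt ▸ ⟨hαt, htβ⟩

theorem exists_memBPL_fixing_Iic_apply_mem_Ioo (hn : 1 < n) {lo y α β : ℝ} (hy : lo < y)
    (hα : lo < α) (hαβ : α < β) :
    ∃ g : ℝ → ℝ, MemBPL n g ∧ (∀ z ≤ lo, g z = z) ∧ g y ∈ Ioo α β := by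
  obtain ⟨e, p₀, hp₀, hφp₀⟩ := exists_zpow_affine_mem_Ioo hn hy hα hαβ
  have hU : IsOpen (Ioo lo y ∩ (fun p => p + (n : ℝ) ^ e * (y - p)) ⁻¹' Ioo α β) :=
    isOpen_Ioo.inter (isOpen_Ioo.preimage (by fun_prop))
  obtain ⟨p, hpZ, hp, hφp⟩ := (dense_zpows hn).exists_mem_open hU ⟨p₀, hp₀, hφp₀⟩
  have hL : y - p ≤ ⌈y - p⌉₊ := Nat.le_ceil _
  refine ⟨bump n e p ⌈y - p⌉₊,
    memBPL_bump hn hpZ ⟨⌈y - p⌉₊, 0, by simp⟩ (Nat.cast_nonneg _),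
    fun z hz => bump_of_le (Nat.cast_nonneg _) (hz.trans hp.1.le), ?_⟩
  rwa [bump_apply (Nat.cast_nonneg _) hp.2.le (by linarith)]

theorem exists_memBPL_fixing_Iic_forall_mem_Icc (hn : 1 < n) (k : ℕ) :
    ∀ (lo : ℝ) (x a b : Fin k → ℝ), StrictMono x → (∀ i, a i < b i) →
      (∀ i j, i < j → b i < a j) → (∀ i, lo < x i) → (∀ i, lo < a i) →
      ∃ f : ℝ → ℝ, MemBPL n f ∧ (∀ z ≤ lo, f z = z) ∧ ∀ i, f (x i) ∈ Icc (a i) (b i) := by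
  induction k with
  | zero => exact fun lo _ _ _ _ _ _ _ _ => ⟨id, memBPL_id, fun _ _ => rfl, finZeroElim⟩
  | succ k ih =>
    intro lo x a b hx hab hord hlox hloa
    obtain ⟨g, hg, hg_lo, hgx⟩ :=
      exists_memBPL_fixing_Iic_apply_mem_Ioo hn (hlox 0) (hloa 0) (hab 0)
    have hgm : StrictMono g := hg.1.1
    obtain ⟨h, hh, hh_lo, hhx⟩ := ih (g (x 0)) (g ∘ x ∘ Fin.succ) (a ∘ Fin.succ) (b ∘ Fin.succ)
      (hgm.comp (hx.comp (Fin.strictMono_succ)))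
      (fun i => hab i.succ) (fun i j hij => hord _ _ (Fin.succ_lt_succ_iff.2 hij))
      (fun i => hgm (hx i.succ_pos)) (fun i => hgx.2.trans (hord 0 i.succ i.succ_pos))
    have hlo : lo < g (x 0) := hg_lo lo le_rfl ▸ hgm (hlox 0)
    refine ⟨h ∘ g, hg.comp hn hh, fun z hz => ?_, Fin.cases ?_ fun i => hhx i⟩
    · rw [Function.comp_apply, hg_lo z hz, hh_lo z (hz.trans hlo.le)]
    · rw [Function.comp_apply, hh_lo _ le_rfl]
      exact Ioo_subset_Icc_self hgx

end

theorem stmt_4_general (n : ℕ) (hn : 2 ≤ n) (k : ℕ)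
    (x a b : Fin k → ℝ) (hx : StrictMono x)
    (hab : ∀ i, a i < b i)
    (hord : ∀ i j : Fin k, i < j → b i < a j) :
    ∃ f : ℝ → ℝ, MemBPL n f ∧ ∀ i, f (x i) ∈ Set.Icc (a i) (b i) := by
  obtain ⟨m, hm⟩ := (Set.finite_range fun i => min (x i) (a i)).bddBelow
  obtain ⟨f, hf, -, hfx⟩ := exists_memBPL_fixing_Iic_forall_mem_Icc hn k (m - 1) x a b hx hab hord
    (fun i => by linarith [hm ⟨i, rfl⟩, min_le_left (x i) (a i)])
    (fun i => by linarith [hm ⟨i, rfl⟩, min_le_right (x i) (a i)])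
  exact ⟨f, hf, hfx⟩

/-- `BPLₙ(ℝ)` acts approximately order `k`-transitively on `ℝ` for every
`k ≥ 1`: given `x₁ < ⋯ < x_k` in `ℝ` and closed intervals `I₁ < ⋯ < I_k` with nonempty
interiors (`Iᵢ = [aᵢ, bᵢ]` with `aᵢ < bᵢ`, and every point of `Iᵢ` less than every point
of `Iⱼ` for `i < j`), some `f ∈ BPLₙ(ℝ)` takes each `xᵢ` into `Iᵢ`. -/
theorem stmt_4 (n : ℕ) (hn : 2 ≤ n) (k : ℕ) (hk : 1 ≤ k)
    (x a b : Fin k → ℝ) (hx : StrictMono x)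
    (hab : ∀ i, a i < b i)
    (hord : ∀ i j : Fin k, i < j → b i < a j) :
    ∃ f : ℝ → ℝ, MemBPL n f ∧ ∀ i, f (x i) ∈ Set.Icc (a i) (b i) :=
  stmt_4_general n hn k x a b hx hab hord
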